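/- On a 4-dimensional Riemannian almost product manifold with tr P = 0, every curvature-like tensor L that is a Riemannian P-tensor has the form L = (1/8){τ(L)(π₁+π₂) + τ*(L)π₃}, where τ(L) and τ*(L) are the scalar curvature and associated scalar curvature of L. -/

import Mathlib

open scoped BigOperators

/-- An abstract (local) model of a Riemannian almost product manifold of
dimension `n`: `V` plays the role of the module of smooth vector fields over
the commutative ℝ-algebra `C` of smooth functions, `g` is the Riemannian
metric, `P` the almost product structure, `D` the directional derivative of
functions, `bracket` the Lie bracket of vector fields, `nabla` the
Levi-Civita connection of `g`, and `e`, `e'` a frame together with its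
`g`-reciprocal frame (used to form traces `g^{ij}·`). -/
structure RAPM (n : ℕ) where
  V : Type
  C : Type
  [instAG : AddCommGroup V]
  [instCR : CommRing C]
  [instAlg : Algebra ℝ C]
  [instMod : Module C V]
  g : V →ₗ[C] V →ₗ[C] C
  P : V →ₗ[C] V
  gSymm : ∀ x y, g x y = g y x
  Pinvol : ∀ x, P (P x) = x
  Piso : ∀ x y, g (P x) (P y) = g x y
  D : V → C → C
  Dadd : ∀ x f h, D x (f + h) = D x f + D x h
  bracket : V → V → V
  bracketD : ∀ x y f, D (bracket x y) f = D x (D y f) - D y (D x f)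
  jacobi : ∀ x y z,
    bracket x (bracket y z) + bracket y (bracket z x) + bracket z (bracket x y) = 0
  nabla : V → V → V
  nabla_add₁ : ∀ x y z, nabla (x + y) z = nabla x z + nabla y z
  nabla_smul₁ : ∀ (f : C) x y, nabla (f • x) y = f • nabla x y
  nabla_add₂ : ∀ x y z, nabla x (y + z) = nabla x y + nabla x z
  nabla_leibniz : ∀ x (f : C) y, nabla x (f • y) = D x f • y + f • nabla x y
  nabla_metric : ∀ x y z, D x (g y z) = g (nabla x y) z + g y (nabla x z)
  torsion_free : ∀ x y, nabla x y - nabla y x = bracket x y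
  e : Fin n → V
  e' : Fin n → V
  dual_frame : ∀ i j, g (e' i) (e j) = if i = j then 1 else 0
  frame_span : ∀ v : V, v = ∑ i, g (e' i) v • e i

namespace RAPM

attribute [instance] RAPM.instAG RAPM.instCR RAPM.instAlg RAPM.instMod

variable {n : ℕ} (Q : RAPM n)

/-- The fundamental tensor `F(x,y,z) = g((∇ₓP)y, z)`. -/
def F (x y z : Q.V) : Q.C := Q.g (Q.nabla x (Q.P y) - Q.P (Q.nabla x y)) z

/-- The curvature operator `R(x,y)z`. -/
def R (x y z : Q.V) : Q.V :=
  Q.nabla x (Q.nabla y z) - Q.nabla y (Q.nabla x z) - Q.nabla (Q.bracket x y) z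

/-- The (0,4) curvature tensor `R(x,y,z,w) = g(R(x,y)z, w)`. -/
def Rm (x y z w : Q.V) : Q.C := Q.g (Q.R x y z) w

/-- `tr P = g^{ij} g(e_i, P e_j)`. -/
def trP : Q.C := ∑ i, Q.g (Q.e' i) (Q.P (Q.e i))

/-- The Lee form `θ(x) = g^{ij} F(e_i, e_j, x)`. -/
def theta (x : Q.V) : Q.C := ∑ i, Q.F (Q.e' i) (Q.e i) x

/-- The covariant derivative `(∇ₓθ)y`. -/
def nablaTheta (x y : Q.V) : Q.C := Q.D x (Q.theta y) - Q.theta (Q.nabla x y)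

/-- `θ` is closed iff `(∇ₓθ)y = (∇_yθ)x`. -/
def closed : Prop := ∀ x y, Q.nablaTheta x y = Q.nablaTheta y x

/-- The covariant derivative `(∇ₓF)(y,z,w)`. -/
def nablaF (x y z w : Q.V) : Q.C :=
  Q.D x (Q.F y z w) - Q.F (Q.nabla x y) z w - Q.F y (Q.nabla x z) w
    - Q.F y z (Q.nabla x w)

def psi1 (S : Q.V → Q.V → Q.C) (x y z w : Q.V) : Q.C :=
  Q.g y z * S x w - Q.g x z * S y w + S y z * Q.g x w - S x z * Q.g y w

def psi2 (S : Q.V → Q.V → Q.C) (x y z w : Q.V) : Q.C :=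
  Q.psi1 S x y (Q.P z) (Q.P w)

/-- The associated metric `g̃(x,y) = g(x,Py)`. -/
def gP (x y : Q.V) : Q.C := Q.g x (Q.P y)

noncomputable def pi1 (x y z w : Q.V) : Q.C :=
  ((1 : ℝ)/2) • Q.psi1 (fun a b => Q.g a b) x y z w

noncomputable def pi2 (x y z w : Q.V) : Q.C :=
  ((1 : ℝ)/2) • Q.psi2 (fun a b => Q.g a b) x y z w

def pi3 (x y z w : Q.V) : Q.C := Q.psi1 Q.gP x y z w

/-- The Ricci tensor `ρ(L)(y,z) = g^{ij} L(e_i,y,z,e_j)` of a (0,4)-tensor. -/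
def ric (L : Q.V → Q.V → Q.V → Q.V → Q.C) (y z : Q.V) : Q.C :=
  ∑ i, L (Q.e' i) y z (Q.e i)

/-- The scalar curvature `τ(L) = g^{ij} ρ(L)(e_i,e_j)`. -/
def scal (L : Q.V → Q.V → Q.V → Q.V → Q.C) : Q.C := ∑ i, Q.ric L (Q.e i) (Q.e' i)

/-- The associated Ricci tensor `ρ*(L)(y,z) = g^{ij} L(e_i,y,z,Pe_j)`. -/
def ricStar (L : Q.V → Q.V → Q.V → Q.V → Q.C) (y z : Q.V) : Q.C :=
  ∑ i, L (Q.e' i) y z (Q.P (Q.e i))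

/-- The associated scalar curvature `τ*(L)`. -/
def scalStar (L : Q.V → Q.V → Q.V → Q.V → Q.C) : Q.C :=
  ∑ i, Q.ricStar L (Q.e i) (Q.e' i)

/-- The trace `g^{ij} S(e_i,e_j)` of a (0,2)-tensor. -/
def trB (S : Q.V → Q.V → Q.C) : Q.C := ∑ i, S (Q.e i) (Q.e' i)

/-- The divergence of a vector field. -/
def divg (v : Q.V) : Q.C := ∑ i, Q.g (Q.e' i) (Q.nabla (Q.e i) v)

/-- A curvature-like tensor. -/
def curvatureLike (L : Q.V → Q.V → Q.V → Q.V → Q.C) : Prop :=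
  (∀ x y z w, L x y z w = - L y x z w) ∧
  (∀ x y z w, L x y z w = - L x y w z) ∧
  (∀ x y z w, L x y z w + L y z x w + L z x y w = 0)

/-- A Riemannian P-tensor. -/
def isPtensor (L : Q.V → Q.V → Q.V → Q.V → Q.C) : Prop :=
  Q.curvatureLike L ∧ ∀ x y z w, L x y (Q.P z) (Q.P w) = L x y z w

/-- The defining condition of the Naveira class `W̄₃` (dimension `n`, so the
factor `1/(2n)` of the paper is `1/n` here). -/
def W3 : Prop :=
  (∀ x y z, Q.F x y z =
    ((1 : ℝ)/(n : ℝ)) • ((Q.g x y + Q.g x (Q.P y)) * Q.theta z +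
      (Q.g x z + Q.g x (Q.P z)) * Q.theta y)) ∧
  (∀ x, Q.theta (Q.P x) = - Q.theta x)

/-- The defining condition of the Naveira class `W̄₆`. -/
def W6 : Prop :=
  (∀ x y z, Q.F x y z =
    ((1 : ℝ)/(n : ℝ)) • ((Q.g x y - Q.g x (Q.P y)) * Q.theta z +
      (Q.g x z - Q.g x (Q.P z)) * Q.theta y)) ∧
  (∀ x, Q.theta (Q.P x) = Q.theta x)

end RAPM

/-!
Splitting vectors along the `±1`-eigenbundles of `P`, i.e. applying the projections
`(1 ± P)/2`, the `P`-invariance of `L`, its pair symmetry and the first Bianchi identity show that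
`L` is the sum of its restrictions to the two eigenbundles. As `tr P = 0` in dimension 4, both
projections are idempotents of trace 2, so every 3-form vanishes on their images: contracting
`π^*e^i ∧ F` with the frame gives `(tr π - k) F`, which starts a downward induction from
`Λ⁵ = 0`. On a rank-2 bundle the vanishing of `B ∧ φ` forces a tensor that is antisymmetric in
both pairs to be `τ/2` times `g ∧ g`, and `τ(L)`, `τ*(L)` are the sum and the difference of the
scalar curvatures of the two restrictions. Writing `g` on the eigenbundles as `(g ± g̃)/2` gives
the formula.
-/

theorem algebraMap_half_mul_two {A : Type*} [Ring A] [Algebra ℝ A] :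
    algebraMap ℝ A (1 / 2) * 2 = 1 := by
  rw [← map_ofNat (algebraMap ℝ A) 2, ← map_mul]
  norm_num

theorem eq_zero_of_two_mul_eq_zero {A : Type*} [Ring A] [Algebra ℝ A] {a : A} (h : 2 * a = 0) :
    a = 0 := by
  rw [← one_mul a, ← algebraMap_half_mul_two, mul_assoc, h, mul_zero]

theorem algebraMap_eighth {A : Type*} [Ring A] [Algebra ℝ A] :
    algebraMap ℝ A (1 / 8) = algebraMap ℝ A (1 / 2) ^ 3 := by
  rw [← map_pow]
  norm_num

theorem Fin.removeNth_succ_vecCons {α : Type*} {k : ℕ} (m : Fin (k + 1)) (x : α)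
    (v : Fin (k + 1) → α) :
    Fin.removeNth m.succ (Matrix.vecCons x v) = Matrix.vecCons x (Fin.removeNth m v) := by
  ext j
  refine Fin.cases ?_ (fun j => ?_) j <;> simp [Fin.removeNth_apply]

namespace AlternatingMap

variable {R M N ι : Type*} [CommRing R] [AddCommGroup M] [Module R M] [AddCommGroup N]
  [Module R N] [Fintype ι] {e : ι → M} {ε : ι → Module.Dual R M}

theorem eq_zero_of_card_lt_of_sum_smul (hε : ∀ x, ∑ i, ε i x • e i = x) {k : ℕ}
    (hk : Fintype.card ι < k) (F : M [⋀^Fin k]→ₗ[R] N) : F = 0 := by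
  classical
  ext v
  rw [zero_apply, ← funext fun j => hε (v j), ← coe_multilinearMap, MultilinearMap.map_sum]
  refine Finset.sum_eq_zero fun r _ => ?_
  rw [MultilinearMap.map_smul_univ, coe_multilinearMap,
    F.map_eq_zero_of_not_injective (fun i => e (r i)), smul_zero]
  exact fun h => (Fintype.card_le_of_injective r h.of_comp).not_gt (by simpa using hk)

variable {π : M →ₗ[R] M}

theorem map_vecCons_apply_of_compLinearMap_eq (hπ : IsIdempotentElem π) {k : ℕ}
    {F : M [⋀^Fin (k + 1)]→ₗ[R] N} (hF : F.compLinearMap π = F) (x : M) (v : Fin k → M) :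
    F (Matrix.vecCons (π x) v) = F (Matrix.vecCons x v) := by
  rw [← hF, compLinearMap_apply, compLinearMap_apply]
  congr 1
  ext j
  refine Fin.cases ?_ (fun j => ?_) j <;> simp [← Module.End.mul_apply, hπ.eq]

theorem compLinearMap_alternatizeUncurryFin_smulRight {k : ℕ} {h : Module.Dual R M}
    (hh : h ∘ₗ π = h) {F : M [⋀^Fin k]→ₗ[R] N} (hF : F.compLinearMap π = F) :
    (alternatizeUncurryFin (h.smulRight F)).compLinearMap π =
      alternatizeUncurryFin (h.smulRight F) := by
  have hF' (w : Fin k → M) : F (fun i => π (w i)) = F w := by rw [← compLinearMap_apply, hF]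
  ext v
  simp only [compLinearMap_apply, alternatizeUncurryFin_apply, LinearMap.smulRight_apply,
    smul_apply]
  refine Finset.sum_congr rfl fun j _ => ?_
  rw [← LinearMap.comp_apply h π, hh]
  exact congrArg _ (congrArg _ (hF' (j.removeNth v)))

/-- Contracting `(ε i ∘ π) ∧ F` against `e i` multiplies a form supported on the image of `π`
by `tr π - k`. -/
theorem sum_alternatizeUncurryFin_smulRight_vecCons (hε : ∀ x, ∑ i, ε i x • e i = x)
    (hπ : IsIdempotentElem π) {k : ℕ} {F : M [⋀^Fin k]→ₗ[R] N} (hF : F.compLinearMap π = F)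
    (v : Fin k → M) :
    ∑ i, alternatizeUncurryFin ((ε i ∘ₗ π).smulRight F) (Matrix.vecCons (e i) v)
      = (∑ i, ε i (π (e i)) - k) • F v := by
  rw [sub_smul, Nat.cast_smul_eq_nsmul]
  cases k with
  | zero => simp [alternatizeUncurryFin_apply, Finset.sum_smul]
  | succ k =>
  have hcontract (m : Fin (k + 1)) :
      ∑ i, ε i (π (v m)) • F (Matrix.vecCons (e i) (m.removeNth v)) = (-1) ^ (m : ℕ) • F v := by
    calc ∑ i, ε i (π (v m)) • F (Matrix.vecCons (e i) (m.removeNth v))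
        = F (Matrix.vecCons (∑ i, ε i (π (v m)) • e i) (m.removeNth v)) := by
          simp only [← map_vecCons_smul]
          exact (map_sum (AddMonoidHom.mk' (fun x => F (Matrix.vecCons x (m.removeNth v)))
            (F.map_vecCons_add _)) _ _).symm
      _ = F (Matrix.vecCons (v m) (m.removeNth v)) := by
          rw [hε, map_vecCons_apply_of_compLinearMap_eq hπ hF]
      _ = (-1) ^ (m : ℕ) • F v := by
          rw [← neg_one_pow_smul_map_insertNth, Fin.insertNth_self_removeNth]
  simp only [alternatizeUncurryFin_apply, Fin.sum_univ_succ (n := k + 1),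
    LinearMap.smulRight_apply, smul_apply, Fin.removeNth_succ_vecCons, Fin.removeNth_zero,
    Matrix.cons_val_zero, Matrix.cons_val_succ, Fin.val_zero, Fin.val_succ, pow_zero, one_smul,
    LinearMap.comp_apply, show ∀ x, Fin.tail (Matrix.vecCons x v) = v from fun _ => rfl]
  have hterm (m : Fin (k + 1)) : ∑ i, (-1) ^ ((m : ℕ) + 1) • ε i (π (v m))
      • F (Matrix.vecCons (e i) (m.removeNth v)) = -F v := by
    rw [← Finset.smul_sum, hcontract, smul_smul, ← pow_add, Odd.neg_one_pow ⟨m, by ring⟩,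
      neg_one_zsmul]
  rw [Finset.sum_add_distrib, Finset.sum_comm, ← Finset.sum_smul]
  simp only [hterm, Finset.sum_neg_distrib, Finset.sum_const, Finset.card_univ, Fintype.card_fin,
    sub_eq_add_neg]

/-- Downward induction on `k`, starting from `Λ^(card ι + 1) = 0`. -/
theorem compLinearMap_eq_zero_of_isUnit_trace_sub (hε : ∀ x, ∑ i, ε i x • e i = x)
    (hπ : IsIdempotentElem π) {k : ℕ}
    (hunit : ∀ j, k ≤ j → j ≤ Fintype.card ι → IsUnit (∑ i, ε i (π (e i)) - j))
    (F : M [⋀^Fin k]→ₗ[R] N) : F.compLinearMap π = 0 := by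
  induction hd : Fintype.card ι + 1 - k generalizing k with
  | zero => exact eq_zero_of_card_lt_of_sum_smul hε (by omega) _
  | succ d ih =>
    set G := F.compLinearMap π
    have hG : G.compLinearMap π = G := by rw [compLinearMap_assoc, ← Module.End.mul_eq_comp, hπ.eq]
    have hwedge (i : ι) : alternatizeUncurryFin ((ε i ∘ₗ π).smulRight G) = 0 := by
      have hh : (ε i ∘ₗ π) ∘ₗ π = ε i ∘ₗ π := by
        rw [LinearMap.comp_assoc, ← Module.End.mul_eq_comp, hπ.eq]
      rw [← compLinearMap_alternatizeUncurryFin_smulRight hh hG]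
      exact ih (fun j hj hjn => hunit j (by omega) hjn) _ (by omega)
    ext v
    have h := sum_alternatizeUncurryFin_smulRight_vecCons hε hπ hG v
    simp only [hwedge, zero_apply, Finset.sum_const_zero] at h
    exact ((hunit k le_rfl (by omega)).smul_eq_zero.mp h.symm)

end AlternatingMap

section CyclicIdentity

variable {R M ι : Type*} [CommRing R] [AddCommGroup M] [Module R M] [Fintype ι] {e : ι → M}
  {ε : ι → Module.Dual R M} {π : M →ₗ[R] M}

open AlternatingMap in
/-- The left-hand side is `(B ∧ φ)(πu, πv, πw)`, a 3-form on a rank-2 image. -/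
theorem LinearMap.cyclic_sum_eq_zero_of_trace_eq_two (hε : ∀ x, ∑ i, ε i x • e i = x)
    (hcard : Fintype.card ι = 4) (hπ : IsIdempotentElem π) (htr : ∑ i, ε i (π (e i)) = 2)
    (h2 : IsUnit (2 : R)) (B : M →ₗ[R] M →ₗ[R] R) (hB : ∀ a b, B a b = -B b a)
    (φ : Module.Dual R M) (u v w : M) :
    B (π u) (π v) * φ (π w) + B (π v) (π w) * φ (π u) + B (π w) (π u) * φ (π v) = 0 := by
  set B₂ : M [⋀^Fin 2]→ₗ[R] R := alternatizeUncurryFin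
    (alternatizeUncurryFinLM ∘ₗ B.compr₂ (constLinearEquivOfIsEmpty (ι := Fin 0)).toLinearMap)
  have hwedge (a b c : M) : alternatizeUncurryFin (φ.smulRight B₂) ![a, b, c]
      = φ a * (B b c - B c b) - φ b * (B a c - B c a) + φ c * (B a b - B b a) := by
    simp [B₂, alternatizeUncurryFin_apply, Fin.sum_univ_succ, Fin.removeNth_apply]
    ring
  have hunit : ∀ j, 3 ≤ j → j ≤ Fintype.card ι → IsUnit (∑ i, ε i (π (e i)) - j) := by
    intro j hj hj'
    rw [hcard] at hj'
    interval_cases j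
    · norm_num [htr]
    · norm_num [htr]
      exact h2
  have h := congrArg (· ![w, u, v]) (compLinearMap_eq_zero_of_isUnit_trace_sub hε hπ hunit
    (alternatizeUncurryFin (φ.smulRight B₂)))
  simp only [compLinearMap_apply, AlternatingMap.zero_apply] at h
  rw [show (fun i => π (![w, u, v] i)) = ![π w, π u, π v] by ext i; fin_cases i <;> rfl,
    hwedge, hB (π v) (π u), hB (π w) (π v), hB (π u) (π w)] at h
  refine h2.mul_right_eq_zero.mp ?_
  linear_combination h

end CyclicIdentity

namespace RAPM

section Frame

variable {n : ℕ} (Q : RAPM n)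

def trace (A : Module.End Q.C Q.V) : Q.C := ∑ i, Q.g (Q.e' i) (A (Q.e i))

theorem trace_one : Q.trace 1 = n := by
  simp [trace, Q.dual_frame]

theorem isUnit_two : IsUnit (2 : Q.C) :=
  .of_mul_eq_one_right _ algebraMap_half_mul_two

theorem g_P_left (u v : Q.V) : Q.g (Q.P u) v = Q.g u (Q.P v) := by
  rw [← Q.Piso u (Q.P v), Q.Pinvol]

theorem sum_g_mul_apply (φ : Module.Dual Q.C Q.V) (x : Q.V) :
    ∑ i, Q.g (Q.e' i) x * φ (Q.e i) = φ x := by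
  conv_rhs => rw [Q.frame_span x]
  simp only [map_sum, map_smul, smul_eq_mul]

theorem sum_g_mul_ric_comp (L : Q.V →ₗ[Q.C] Q.V →ₗ[Q.C] Q.V →ₗ[Q.C] Q.V →ₗ[Q.C] Q.C)
    (π : Module.End Q.C Q.V) (u x : Q.V) :
    ∑ i, Q.g (Q.e' i) x * Q.ric (fun a b c d => L (π a) (π b) (π c) (π d)) u (Q.e i)
      = Q.ric (fun a b c d => L (π a) (π b) (π c) (π d)) u x := by
  simp only [ric, Finset.mul_sum]
  rw [Finset.sum_comm]
  exact Finset.sum_congr rfl fun k _ =>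
    Q.sum_g_mul_apply ((L (π (Q.e' k)) (π u)).flip (π (Q.e k)) ∘ₗ π) x

/-- For `s = ±1`, the projection `(1 + s P) / 2` onto the `s`-eigenbundle of `P`. -/
noncomputable def eigenproj (s : Q.C) : Module.End Q.C Q.V :=
  algebraMap ℝ Q.C (1 / 2) • (1 + s • Q.P)

end Frame

section Eigenproj

variable {n : ℕ} {Q : RAPM n}

theorem eigenproj_apply (s : Q.C) (v : Q.V) :
    Q.eigenproj s v = algebraMap ℝ Q.C (1 / 2) • (v + s • Q.P v) := rfl

theorem eigenproj_add_eigenproj_neg (s : Q.C) (v : Q.V) :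
    Q.eigenproj s v + Q.eigenproj (-s) v = v := by
  rw [eigenproj_apply, eigenproj_apply, ← smul_add, neg_smul, add_add_add_comm, add_neg_cancel,
    add_zero, ← two_smul Q.C, smul_smul, algebraMap_half_mul_two, one_smul]

theorem g_eigenproj_left (s : Q.C) (u v : Q.V) :
    Q.g (Q.eigenproj s u) v = Q.g u (Q.eigenproj s v) := by
  simp only [eigenproj_apply, map_smul, map_add, LinearMap.smul_apply, LinearMap.add_apply,
    g_P_left]

theorem trace_eigenproj (s : Q.C) :
    Q.trace (Q.eigenproj s) = algebraMap ℝ Q.C (1 / 2) * (n + s * Q.trP) := by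
  rw [← Q.trace_one]
  simp only [trace, trP, eigenproj_apply, map_smul, map_add, smul_eq_mul, Module.End.one_apply,
    ← Finset.mul_sum, Finset.sum_add_distrib]

variable {s : Q.C} (hs : s * s = 1)
include hs

theorem P_eigenproj (v : Q.V) : Q.P (Q.eigenproj s v) = s • Q.eigenproj s v := by
  rw [eigenproj_apply, map_smul, map_add, map_smul, Q.Pinvol]
  linear_combination (norm := module) (-(algebraMap ℝ Q.C (1 / 2)) • hs) • Q.P v

theorem eigenproj_P (v : Q.V) : Q.eigenproj s (Q.P v) = s • Q.eigenproj s v := by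
  rw [eigenproj_apply, eigenproj_apply, Q.Pinvol]
  linear_combination (norm := module) (-(algebraMap ℝ Q.C (1 / 2)) • hs) • Q.P v

theorem isIdempotentElem_eigenproj : IsIdempotentElem (Q.eigenproj s) := by
  ext v
  rw [Module.End.mul_apply, eigenproj_apply (v := Q.eigenproj s v), P_eigenproj hs, smul_smul, hs,
    one_smul, ← two_smul Q.C, smul_smul, algebraMap_half_mul_two, one_smul]

theorem g_eigenproj_eigenproj (u v : Q.V) :
    Q.g (Q.eigenproj s u) (Q.eigenproj s v)
      = algebraMap ℝ Q.C (1 / 2) * (Q.g u v + s * Q.g u (Q.P v)) := by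
  rw [g_eigenproj_left, ← Module.End.mul_apply, (isIdempotentElem_eigenproj hs).eq,
    eigenproj_apply, map_smul, map_add, map_smul, smul_eq_mul, smul_eq_mul]

end Eigenproj

theorem curvatureLike.apply_eq_apply_swap {n : ℕ} {Q : RAPM n}
    {L : Q.V → Q.V → Q.V → Q.V → Q.C} (hL : Q.curvatureLike L) (x y z w : Q.V) :
    L x y z w = L z w x y := by
  obtain ⟨hA, hB, hBi⟩ := hL
  have e₁ := hBi x y z w
  have e₂ := hBi y z w x
  have e₃ := hBi z w x y
  have e₄ := hBi w x y z
  rw [hB y z w x, hB z w y x, hA w y z x, hB y w z x] at e₂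
  rw [hA w x z y, hB x w z y, hA x z w y, hB z x w y] at e₃
  rw [hA w x y z, hB x y w z] at e₄
  exact sub_eq_zero.mp (eq_zero_of_two_mul_eq_zero (by linear_combination e₁ + e₂ - e₃ - e₄))

section PTensor

variable {n : ℕ} {Q : RAPM n} {L : Q.V →ₗ[Q.C] Q.V →ₗ[Q.C] Q.V →ₗ[Q.C] Q.V →ₗ[Q.C] Q.C}
  (hL : Q.isPtensor (fun x y z w => L x y z w))
include hL

section Eigenbundle

variable {s : Q.C} (hs : s * s = 1)
include hs

theorem isPtensor.apply_eigenproj_eigenproj_neg (x y z w : Q.V) :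
    L x y (Q.eigenproj s z) (Q.eigenproj (-s) w) = 0 := by
  have h : L x y (Q.P (Q.eigenproj s z)) (Q.P (Q.eigenproj (-s) w))
      = L x y (Q.eigenproj s z) (Q.eigenproj (-s) w) := hL.2 _ _ _ _
  rw [P_eigenproj hs, P_eigenproj (by rwa [neg_mul_neg])] at h
  simp only [map_smul, LinearMap.smul_apply, smul_eq_mul] at h
  exact eq_zero_of_two_mul_eq_zero
    (by linear_combination -h - L x y (Q.eigenproj s z) (Q.eigenproj (-s) w) * hs)

theorem isPtensor.apply_eq_add_eigenproj_right (x y z w : Q.V) :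
    L x y z w = L x y (Q.eigenproj s z) (Q.eigenproj s w)
      + L x y (Q.eigenproj (-s) z) (Q.eigenproj (-s) w) := by
  have hs' : -s * -s = 1 := by rwa [neg_mul_neg]
  conv_lhs => rw [← eigenproj_add_eigenproj_neg s z, ← eigenproj_add_eigenproj_neg s w]
  have h := hL.apply_eigenproj_eigenproj_neg hs' x y z w
  rw [neg_neg] at h
  simp only [map_add, LinearMap.add_apply, hL.apply_eigenproj_eigenproj_neg hs, h]
  ring

theorem isPtensor.apply_eigenproj_eigenproj_neg_left (x y z w : Q.V) :
    L (Q.eigenproj s x) (Q.eigenproj (-s) y) z w = 0 := by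
  rw [hL.1.apply_eq_apply_swap, hL.apply_eigenproj_eigenproj_neg hs]

theorem isPtensor.apply_eq_add_eigenproj_left (x y z w : Q.V) :
    L x y z w = L (Q.eigenproj s x) (Q.eigenproj s y) z w
      + L (Q.eigenproj (-s) x) (Q.eigenproj (-s) y) z w := by
  rw [hL.1.apply_eq_apply_swap, hL.apply_eq_add_eigenproj_right hs,
    hL.1.apply_eq_apply_swap z w, hL.1.apply_eq_apply_swap z w]

theorem isPtensor.apply_eigenproj_eigenproj_eigenproj_neg_eigenproj_neg (x y z w : Q.V) :
    L (Q.eigenproj s x) (Q.eigenproj s y) (Q.eigenproj (-s) z) (Q.eigenproj (-s) w) = 0 := by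
  have hs' : -s * -s = 1 := by rwa [neg_mul_neg]
  have h := hL.apply_eigenproj_eigenproj_neg_left hs' z x (Q.eigenproj s y) (Q.eigenproj (-s) w)
  rw [neg_neg] at h
  have hBi := hL.1.2.2 (Q.eigenproj s x) (Q.eigenproj s y) (Q.eigenproj (-s) z)
    (Q.eigenproj (-s) w)
  simp only [hL.apply_eigenproj_eigenproj_neg_left hs, h] at hBi
  linear_combination hBi

theorem isPtensor.apply_eigenproj_eigenproj (x y z w : Q.V) :
    L (Q.eigenproj s x) (Q.eigenproj s y) z w
      = L (Q.eigenproj s x) (Q.eigenproj s y) (Q.eigenproj s z) (Q.eigenproj s w) := by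
  rw [hL.apply_eq_add_eigenproj_right hs (Q.eigenproj s x),
    hL.apply_eigenproj_eigenproj_eigenproj_neg_eigenproj_neg hs, add_zero]

theorem isPtensor.apply_eq_add_eigenproj (x y z w : Q.V) :
    L x y z w = L (Q.eigenproj s x) (Q.eigenproj s y) (Q.eigenproj s z) (Q.eigenproj s w)
      + L (Q.eigenproj (-s) x) (Q.eigenproj (-s) y) (Q.eigenproj (-s) z)
          (Q.eigenproj (-s) w) := by
  have hs' : -s * -s = 1 := by rwa [neg_mul_neg]
  rw [hL.apply_eq_add_eigenproj_left hs, hL.apply_eigenproj_eigenproj hs x y z w,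
    hL.apply_eigenproj_eigenproj hs' x y z w]

end Eigenbundle

theorem isPtensor.scal_eq :
    Q.scal (fun x y z w => L x y z w)
      = Q.scal (fun a b c d => L (Q.eigenproj 1 a) (Q.eigenproj 1 b) (Q.eigenproj 1 c)
          (Q.eigenproj 1 d))
        + Q.scal (fun a b c d => L (Q.eigenproj (-1) a) (Q.eigenproj (-1) b)
          (Q.eigenproj (-1) c) (Q.eigenproj (-1) d)) := by
  simp only [scal, ric, ← Finset.sum_add_distrib]
  exact Finset.sum_congr rfl fun i _ => Finset.sum_congr rfl fun k _ =>
    hL.apply_eq_add_eigenproj (one_mul 1) _ _ _ _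

theorem isPtensor.scalStar_eq :
    Q.scalStar (fun x y z w => L x y z w)
      = Q.scal (fun a b c d => L (Q.eigenproj 1 a) (Q.eigenproj 1 b) (Q.eigenproj 1 c)
          (Q.eigenproj 1 d))
        - Q.scal (fun a b c d => L (Q.eigenproj (-1) a) (Q.eigenproj (-1) b)
          (Q.eigenproj (-1) c) (Q.eigenproj (-1) d)) := by
  simp only [scalStar, ricStar, scal, ric, ← Finset.sum_sub_distrib]
  refine Finset.sum_congr rfl fun i _ => Finset.sum_congr rfl fun k _ => ?_
  rw [hL.apply_eq_add_eigenproj (one_mul 1), eigenproj_P (one_mul 1),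
    eigenproj_P (by norm_num : (-1 : Q.C) * -1 = 1)]
  simp only [one_smul, neg_one_smul, map_neg]
  ring

end PTensor

section RankTwo

variable {Q : RAPM 4} {π : Module.End Q.C Q.V} (hπ : IsIdempotentElem π)
  (hsym : ∀ a b, Q.g (π a) b = Q.g a (π b)) (htr : Q.trace π = 2)
  {L : Q.V →ₗ[Q.C] Q.V →ₗ[Q.C] Q.V →ₗ[Q.C] Q.V →ₗ[Q.C] Q.C}
  (hA : ∀ x y z w, L x y z w = -L y x z w)
  (hsupp : ∀ a b c d, L (π a) (π b) c d = L (π a) (π b) (π c) (π d))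
include hπ hsym htr hA hsupp

/-- Sum the cyclic identity for the 2-form `L(·, ·, z, e_i)` and the 1-form `g(·, s)` at
`w = e'_i` over the frame. -/
theorem apply_eq_ric_mul_sub_ric_mul (u v z s : Q.V) :
    L (π u) (π v) z (π s)
      = Q.ric (fun a b c d => L (π a) (π b) (π c) (π d)) v z * Q.g (π u) s
        - Q.ric (fun a b c d => L (π a) (π b) (π c) (π d)) u z * Q.g (π v) s := by
  have hcyc (i : Fin 4) := LinearMap.cyclic_sum_eq_zero_of_trace_eq_two
    (ε := fun i => Q.g (Q.e' i)) (fun x => (Q.frame_span x).symm) (Fintype.card_fin 4) hπ htr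
    Q.isUnit_two (L.compr₂ (LinearMap.applyₗ (Q.e i) ∘ₗ LinearMap.applyₗ z))
    (fun a b => by simp [hA a b]) (Q.g.flip s) u v (Q.e' i)
  have hsum := Finset.sum_eq_zero (s := Finset.univ) fun i _ => hcyc i
  simp only [LinearMap.compr₂_apply, LinearMap.comp_apply, LinearMap.applyₗ_apply_apply,
    LinearMap.flip_apply, Finset.sum_add_distrib, ← Finset.sum_mul] at hsum
  have h₁ : ∑ i, L (π u) (π v) z (Q.e i) * Q.g (π (Q.e' i)) s = L (π u) (π v) z (π s) := by
    simp only [hsym, mul_comm (L _ _ _ _)]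
    exact Q.sum_g_mul_apply _ _
  have h₂ : ∑ i, L (π v) (π (Q.e' i)) z (Q.e i)
      = -Q.ric (fun a b c d => L (π a) (π b) (π c) (π d)) v z := by
    simp only [ric, ← Finset.sum_neg_distrib]
    exact Finset.sum_congr rfl fun i _ => by rw [hsupp, hA (π v)]
  have h₃ : ∑ i, L (π (Q.e' i)) (π u) z (Q.e i)
      = Q.ric (fun a b c d => L (π a) (π b) (π c) (π d)) u z :=
    Finset.sum_congr rfl fun i _ => hsupp _ _ _ _
  rw [h₁, h₂, h₃] at hsum
  linear_combination hsum

variable (hB : ∀ x y z w, L x y z w = -L x y w z)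
include hB

/-- Contracting the previous identity over `(v, z)` gives `2ρ = τ' g` for the trace `τ'` taken
in the order `(e'_i, e_i)`; contracting once more and using `tr π = 2` shows `τ' = τ`. -/
theorem two_mul_ric_eq_scal_mul (u s : Q.V) :
    2 * Q.ric (fun a b c d => L (π a) (π b) (π c) (π d)) u s
      = Q.scal (fun a b c d => L (π a) (π b) (π c) (π d)) * Q.g (π u) s := by
  have hπ' (v : Q.V) : π (π v) = π v := by rw [← Module.End.mul_apply, hπ.eq]
  have hcontr (u s : Q.V) : 2 * Q.ric (fun a b c d => L (π a) (π b) (π c) (π d)) u s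
      = (∑ i, Q.ric (fun a b c d => L (π a) (π b) (π c) (π d)) (Q.e' i) (Q.e i))
        * Q.g (π u) s := by
    have h := Finset.sum_congr (s₁ := Finset.univ) rfl fun i _ =>
      apply_eq_ric_mul_sub_ric_mul hπ hsym htr hA hsupp u (Q.e' i) (Q.e i) s
    rw [Finset.sum_sub_distrib, ← Finset.sum_mul] at h
    have hl : ∑ i, L (π u) (π (Q.e' i)) (Q.e i) (π s)
        = Q.ric (fun a b c d => L (π a) (π b) (π c) (π d)) u s :=
      Finset.sum_congr rfl fun i _ => by rw [hsupp, hπ', hA, hB, neg_neg]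
    have hr : ∑ i, Q.ric (fun a b c d => L (π a) (π b) (π c) (π d)) u (Q.e i) * Q.g (π (Q.e' i)) s
        = Q.ric (fun a b c d => L (π a) (π b) (π c) (π d)) u s := by
      simp only [hsym, mul_comm (Q.ric _ _ _)]
      rw [sum_g_mul_ric_comp]
      simp only [ric, hπ']
    rw [hl, hr] at h
    linear_combination h
  have hscal : Q.scal (fun a b c d => L (π a) (π b) (π c) (π d))
      = ∑ i, Q.ric (fun a b c d => L (π a) (π b) (π c) (π d)) (Q.e' i) (Q.e i) := by
    refine (Q.isUnit_two.mul_right_inj).mp ?_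
    have htr' : ∑ i, Q.g (π (Q.e i)) (Q.e' i) = 2 := by
      rw [← htr]
      exact Finset.sum_congr rfl fun i _ => Q.gSymm _ _
    rw [scal, Finset.mul_sum, Finset.sum_congr rfl fun i _ => hcontr (Q.e i) (Q.e' i),
      ← Finset.mul_sum, htr', mul_comm]
  rw [hcontr, hscal]

theorem two_mul_apply_eq_scal_mul (x y z w : Q.V) :
    2 * L (π x) (π y) (π z) (π w)
      = Q.scal (fun a b c d => L (π a) (π b) (π c) (π d))
        * (Q.g (π x) (π w) * Q.g (π y) (π z) - Q.g (π y) (π w) * Q.g (π x) (π z)) := by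
  have hg (a : Q.V) : Q.g (π a) (π w) = Q.g (π a) w := by
    rw [← hsym, ← Module.End.mul_apply, hπ.eq]
  rw [apply_eq_ric_mul_sub_ric_mul hπ hsym htr hA hsupp, hg, hg]
  linear_combination Q.g (π x) w * two_mul_ric_eq_scal_mul hπ hsym htr hA hsupp hB y (π z)
    - Q.g (π y) w * two_mul_ric_eq_scal_mul hπ hsym htr hA hsupp hB x (π z)

end RankTwo

theorem isPtensor.two_mul_apply_eigenproj {Q : RAPM 4} (htr : Q.trP = 0)
    {L : Q.V →ₗ[Q.C] Q.V →ₗ[Q.C] Q.V →ₗ[Q.C] Q.V →ₗ[Q.C] Q.C}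
    (hL : Q.isPtensor (fun x y z w => L x y z w)) {s : Q.C} (hs : s * s = 1) (x y z w : Q.V) :
    2 * L (Q.eigenproj s x) (Q.eigenproj s y) (Q.eigenproj s z) (Q.eigenproj s w)
      = Q.scal (fun a b c d => L (Q.eigenproj s a) (Q.eigenproj s b) (Q.eigenproj s c)
          (Q.eigenproj s d))
        * (Q.g (Q.eigenproj s x) (Q.eigenproj s w) * Q.g (Q.eigenproj s y) (Q.eigenproj s z)
          - Q.g (Q.eigenproj s y) (Q.eigenproj s w) * Q.g (Q.eigenproj s x) (Q.eigenproj s z)) := by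
  have htrace : Q.trace (Q.eigenproj s) = 2 := by
    rw [trace_eigenproj, htr, mul_zero, add_zero, Nat.cast_ofNat]
    linear_combination 2 * (algebraMap_half_mul_two : algebraMap ℝ Q.C (1 / 2) * 2 = 1)
  exact two_mul_apply_eq_scal_mul (isIdempotentElem_eigenproj hs) (g_eigenproj_left s) htrace
    hL.1.1 (hL.apply_eigenproj_eigenproj hs) hL.1.2.1 x y z w

end RAPM

open RAPM in
/-- On a 4-dimensional Riemannian almost product manifold with `tr P = 0`,
every Riemannian P-tensor `L` has the form
`L = (1/8){τ(L)(π₁+π₂) + τ*(L)π₃}`. -/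
theorem statement5 (Q : RAPM 4) (htr : Q.trP = 0)
    (L : Q.V →ₗ[Q.C] Q.V →ₗ[Q.C] Q.V →ₗ[Q.C] Q.V →ₗ[Q.C] Q.C)
    (hL : Q.isPtensor (fun x y z w => L x y z w)) :
    ∀ x y z w, L x y z w =
      ((1 : ℝ)/8) • (Q.scal (fun x y z w => L x y z w) *
          (Q.pi1 x y z w + Q.pi2 x y z w) +
        Q.scalStar (fun x y z w => L x y z w) * Q.pi3 x y z w) := by
  intro x y z w
  have hpos : (1 : Q.C) * 1 = 1 := one_mul 1
  have hneg : (-1 : Q.C) * -1 = 1 := by norm_num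
  have hplus := hL.two_mul_apply_eigenproj htr hpos x y z w
  have hminus := hL.two_mul_apply_eigenproj htr hneg x y z w
  simp only [g_eigenproj_eigenproj hpos, g_eigenproj_eigenproj hneg] at hplus hminus
  rw [hL.apply_eq_add_eigenproj hpos, hL.scal_eq, hL.scalStar_eq]
  simp only [pi1, pi2, pi3, psi1, psi2, gP, Algebra.smul_def, algebraMap_eighth]
  set half := algebraMap ℝ Q.C (1 / 2)
  have hhalf : half * 2 = 1 := algebraMap_half_mul_two
  set Lp := L (Q.eigenproj 1 x) (Q.eigenproj 1 y) (Q.eigenproj 1 z) (Q.eigenproj 1 w)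
  set Lm := L (Q.eigenproj (-1) x) (Q.eigenproj (-1) y) (Q.eigenproj (-1) z) (Q.eigenproj (-1) w)
  set τp := Q.scal (fun a b c d => L (Q.eigenproj 1 a) (Q.eigenproj 1 b) (Q.eigenproj 1 c)
    (Q.eigenproj 1 d))
  set τm := Q.scal (fun a b c d => L (Q.eigenproj (-1) a) (Q.eigenproj (-1) b)
    (Q.eigenproj (-1) c) (Q.eigenproj (-1) d))
  linear_combination half * hplus + half * hminus + (-Lp - Lm - half ^ 3 * (τp + τm) *
    (Q.g x w * Q.g y z - Q.g y w * Q.g x z + Q.g x (Q.P w) * Q.g y (Q.P z)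
      - Q.g y (Q.P w) * Q.g x (Q.P z))) * hhalf
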